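/- Let M be the squared-distance matrix of points x_1,...,x_n in ℝ^m, and let P = I - (1/n)J. Then the rank of PMP is at most m. Conversely, if M is symmetric with zero diagonal and PMP is negative semidefinite of rank r, then M is the squared-distance matrix of n points in ℝ^r. -/

import Mathlib

/-!
Double centering `A ↦ P * A * P` kills every matrix of the form `a i + b j`. A squared-distance
matrix is `‖x i‖² + ‖x j‖² - 2 G i j` with `G` the Gram matrix of the points, so
`P * M * P = -2 • (P * G * P)` has rank at most `rank G ≤ m`. Conversely `-½ • (P * M * P)` is
positive semidefinite of rank `r`, hence the Gram matrix of `n` vectors in `ℝ^r`; since `P` fixes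
`e i - e j`, the quadratic forms of `P * M * P` and of `M` agree on `e i - e j`, and this reads
`‖x i - x j‖² = M i j`.
-/

open Matrix Set

noncomputable def centeringMatrix (ι : Type*) [Fintype ι] [DecidableEq ι] : Matrix ι ι ℝ :=
  1 - (Fintype.card ι : ℝ)⁻¹ • of fun _ _ => 1

section Centering

variable {ι : Type*} [Fintype ι] [DecidableEq ι]

theorem centeringMatrix_mul_apply (A : Matrix ι ι ℝ) (i j : ι) :
    (centeringMatrix ι * A) i j = A i j - (Fintype.card ι : ℝ)⁻¹ * ∑ k, A k j := by
  simp [centeringMatrix, mul_apply, sub_mul, one_apply, Finset.sum_sub_distrib, Finset.mul_sum]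

theorem mul_centeringMatrix_apply (A : Matrix ι ι ℝ) (i j : ι) :
    (A * centeringMatrix ι) i j = A i j - (Fintype.card ι : ℝ)⁻¹ * ∑ k, A i k := by
  simp [centeringMatrix, mul_apply, mul_sub, one_apply, Finset.sum_sub_distrib, Finset.sum_mul,
    mul_comm]

theorem centeringMatrix_mul_mul_centeringMatrix_apply (A : Matrix ι ι ℝ) (i j : ι) :
    (centeringMatrix ι * A * centeringMatrix ι) i j =
      A i j - (Fintype.card ι : ℝ)⁻¹ * ∑ k, A i k - (Fintype.card ι : ℝ)⁻¹ * ∑ k, A k j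
        + (Fintype.card ι : ℝ)⁻¹ ^ 2 * ∑ k, ∑ l, A k l := by
  simp only [mul_centeringMatrix_apply, centeringMatrix_mul_apply, Finset.sum_sub_distrib,
    ← Finset.mul_sum]
  rw [Finset.sum_comm (f := fun k l => A l k)]
  ring

theorem centeringMatrix_mul_of_add_mul_centeringMatrix (a b : ι → ℝ) :
    centeringMatrix ι * of (fun i j => a i + b j) * centeringMatrix ι = 0 := by
  rcases isEmpty_or_nonempty ι with hι | hι
  · exact Subsingleton.elim _ _
  have hcard : (Fintype.card ι : ℝ) ≠ 0 := Nat.cast_ne_zero.mpr Fintype.card_ne_zero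
  ext i j
  simp only [centeringMatrix_mul_mul_centeringMatrix_apply, of_apply, Finset.sum_add_distrib,
    Finset.sum_const, Finset.card_univ, nsmul_eq_mul, ← Finset.mul_sum, Matrix.zero_apply]
  field_simp
  ring

-- `A i i - A i j - A j i + A j j` is the quadratic form of `A` at `e i - e j`, a vector that the
-- centering matrix fixes.
theorem centeringMatrix_mul_mul_centeringMatrix_secondDiff (A : Matrix ι ι ℝ) (i j : ι) :
    let B := centeringMatrix ι * A * centeringMatrix ι
    B i i - B i j - B j i + B j j = A i i - A i j - A j i + A j j := by
  simp only [centeringMatrix_mul_mul_centeringMatrix_apply]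
  ring

end Centering

section Gram

variable {ι 𝕜 : Type*} [RCLike 𝕜]

theorem rank_gram_le_finrank [Fintype ι] {E : Type*} [NormedAddCommGroup E]
    [InnerProductSpace 𝕜 E] [FiniteDimensional 𝕜 E] (v : ι → E) :
    (gram 𝕜 v).rank ≤ Module.finrank 𝕜 E := by
  rw [gram_eq_conjTranspose_mul (stdOrthonormalBasis 𝕜 E)]
  exact (rank_mul_le_left _ _).trans ((rank_le_card_width _).trans_eq (Fintype.card_fin _))

theorem real_dist_sq_eq_gram_apply {E : Type*} [NormedAddCommGroup E] [InnerProductSpace ℝ E]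
    (v : ι → E) (i j : ι) :
    dist (v i) (v j) ^ 2 = gram ℝ v i i + gram ℝ v j j - 2 * gram ℝ v i j := by
  rw [dist_eq_norm, norm_sub_sq_real, gram_apply, gram_apply, gram_apply,
    real_inner_self_eq_norm_sq, real_inner_self_eq_norm_sq]
  ring

open scoped ComplexOrder MatrixOrder in
theorem Matrix.PosSemidef.exists_eq_gram [Fintype ι] [DecidableEq ι] {A : Matrix ι ι 𝕜}
    (hA : A.PosSemidef) {r : ℕ} (hr : A.rank = r) :
    ∃ x : ι → EuclideanSpace 𝕜 (Fin r), gram 𝕜 x = A := by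
  obtain ⟨B, rfl⟩ := CStarAlgebra.nonneg_iff_eq_star_mul_self.mp hA.nonneg
  let v : ι → EuclideanSpace 𝕜 ι := fun j => WithLp.toLp 2 (B.col j)
  let V := Submodule.span 𝕜 (range v)
  have hV : Module.finrank 𝕜 V = r := by
    rw [← hr, star_eq_conjTranspose, rank_conjTranspose_mul_self, rank_eq_finrank_span_cols,
      ← LinearEquiv.finrank_map_eq (WithLp.linearEquiv 2 𝕜 (ι → 𝕜)).symm, Submodule.map_span,
      ← range_comp]
    rfl
  let b := (stdOrthonormalBasis 𝕜 V).reindex (finCongr hV)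
  refine ⟨fun j => b.repr ⟨v j, Submodule.subset_span (mem_range_self j)⟩, ?_⟩
  ext i j
  rw [gram_apply, LinearIsometryEquiv.inner_map_map, Submodule.coe_inner]
  simp [v, mul_apply, PiLp.inner_apply, mul_comm]

end Gram

section DistanceMatrix

variable {ι : Type*} [Fintype ι] [DecidableEq ι]

theorem rank_centeringMatrix_mul_mul_centeringMatrix_le {E : Type*} [NormedAddCommGroup E]
    [InnerProductSpace ℝ E] [FiniteDimensional ℝ E] (x : ι → E) (M : Matrix ι ι ℝ)
    (hM : ∀ i j, M i j = dist (x i) (x j) ^ 2) :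
    (centeringMatrix ι * M * centeringMatrix ι).rank ≤ Module.finrank ℝ E := by
  have hM' : M = of (fun i j => gram ℝ x i i + gram ℝ x j j) - (2 : ℝ) • gram ℝ x := by
    ext i j
    simp [hM, real_dist_sq_eq_gram_apply]
  have hPMP : centeringMatrix ι * M * centeringMatrix ι =
      (-2 : ℝ) • (centeringMatrix ι * gram ℝ x * centeringMatrix ι) := by
    rw [hM', Matrix.mul_sub, Matrix.sub_mul, centeringMatrix_mul_of_add_mul_centeringMatrix,
      Matrix.mul_smul, Matrix.smul_mul, zero_sub, neg_smul]
  calc (centeringMatrix ι * M * centeringMatrix ι).rank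
      = (centeringMatrix ι * gram ℝ x * centeringMatrix ι).rank := by
        rw [hPMP]
        exact rank_smul_of_mem_nonZeroDivisors _ (mem_nonZeroDivisors_of_ne_zero (by norm_num))
    _ ≤ (gram ℝ x).rank := (rank_mul_le_left _ _).trans (rank_mul_le_right _ _)
    _ ≤ Module.finrank ℝ E := rank_gram_le_finrank x

theorem exists_dist_sq_eq_of_posSemidef_neg_centeringMatrix_mul_mul (M : Matrix ι ι ℝ)
    (hsymm : M.IsSymm) (hdiag : ∀ i, M i i = 0)
    (hpsd : (-(centeringMatrix ι * M * centeringMatrix ι)).PosSemidef) :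
    ∃ x : ι → EuclideanSpace ℝ (Fin (centeringMatrix ι * M * centeringMatrix ι).rank),
      ∀ i j, M i j = dist (x i) (x j) ^ 2 := by
  set B := centeringMatrix ι * M * centeringMatrix ι
  have hpsd' : ((-2⁻¹ : ℝ) • B).PosSemidef := by
    simpa [smul_neg, neg_smul] using hpsd.smul (a := (2⁻¹ : ℝ)) (by norm_num)
  have hrank : ((-2⁻¹ : ℝ) • B).rank = B.rank :=
    rank_smul_of_mem_nonZeroDivisors _ (mem_nonZeroDivisors_of_ne_zero (by norm_num))
  obtain ⟨x, hx⟩ := hpsd'.exists_eq_gram hrank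
  have hgram : ∀ a b, gram ℝ x a b = -2⁻¹ * B a b := fun a b => by rw [hx]; rfl
  refine ⟨x, fun i j => ?_⟩
  have hgram_symm : gram ℝ x j i = gram ℝ x i j := by simp only [gram_apply, real_inner_comm]
  have hsecond := centeringMatrix_mul_mul_centeringMatrix_secondDiff M i j
  rw [hdiag i, hdiag j, hsymm.apply i j] at hsecond
  rw [hgram, hgram] at hgram_symm
  rw [real_dist_sq_eq_gram_apply, hgram, hgram, hgram]
  linarith

end DistanceMatrix

theorem stmt_2_general (n : ℕ)
    (P : Matrix (Fin n) (Fin n) ℝ)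
    (hP : P = 1 - (n : ℝ)⁻¹ • (Matrix.of fun _ _ => (1 : ℝ))) :
    (∀ (m : ℕ) (x : Fin n → EuclideanSpace ℝ (Fin m)) (M : Matrix (Fin n) (Fin n) ℝ),
        (∀ i j, M i j = dist (x i) (x j) ^ 2) → (P * M * P).rank ≤ m)
    ∧
    (∀ (M : Matrix (Fin n) (Fin n) ℝ) (r : ℕ),
        M.IsSymm → (∀ i, M i i = 0) → (-(P * M * P)).PosSemidef →
        (P * M * P).rank = r →
        ∃ x : Fin n → EuclideanSpace ℝ (Fin r),
          ∀ i j, M i j = dist (x i) (x j) ^ 2) := by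
  obtain rfl : P = centeringMatrix (Fin n) := by simp [hP, centeringMatrix]
  refine ⟨fun m x M hM => ?_, fun M r hsymm hdiag hpsd hr => ?_⟩
  · simpa using rank_centeringMatrix_mul_mul_centeringMatrix_le x M hM
  · subst hr
    exact exists_dist_sq_eq_of_posSemidef_neg_centeringMatrix_mul_mul M hsymm hdiag hpsd

theorem stmt_2 (n : ℕ) (hn : 0 < n)
    (P : Matrix (Fin n) (Fin n) ℝ)
    (hP : P = 1 - (n : ℝ)⁻¹ • (Matrix.of fun _ _ => (1 : ℝ))) :
    (∀ (m : ℕ) (x : Fin n → EuclideanSpace ℝ (Fin m)) (M : Matrix (Fin n) (Fin n) ℝ),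
        (∀ i j, M i j = dist (x i) (x j) ^ 2) → (P * M * P).rank ≤ m)
    ∧
    (∀ (M : Matrix (Fin n) (Fin n) ℝ) (r : ℕ),
        M.IsSymm → (∀ i, M i i = 0) → (-(P * M * P)).PosSemidef →
        (P * M * P).rank = r →
        ∃ x : Fin n → EuclideanSpace ℝ (Fin r),
          ∀ i j, M i j = dist (x i) (x j) ^ 2) :=
  stmt_2_general n P hP
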